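/- arXiv:2307.01980 — 3 statements merged into one kernel-verified Lean document; each statement's English description precedes it below -/
import Mathlib

section
/- The subspace D₀₀ of Hermitian 9×9 matrices M with M_B = 0, M_A = 0, and all three diagonal blocks M_{ii} diagonal, is invariant under the action of the group MSU(3)×MSU(3) of pairs of monomial special unitary 3×3 matrices, acting by (γ₁,γ₂)·M = (γ₁⊗γ₂)M(γ₁⊗γ₂)†. -/
noncomputable section

open Matrix Kronecker

/-- The sum of the three diagonal 3×3 blocks of a 9×9 matrix. -/
def blockB (M : Matrix (Fin 3 × Fin 3) (Fin 3 × Fin 3) ℂ) : Matrix (Fin 3) (Fin 3) ℂ :=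
  Matrix.of fun a b => ∑ i : Fin 3, M (i, a) (i, b)

/-- The 3×3 matrix of traces of the 3×3 blocks of a 9×9 matrix. -/
def blockA (M : Matrix (Fin 3 × Fin 3) (Fin 3 × Fin 3) ℂ) : Matrix (Fin 3) (Fin 3) ℂ :=
  Matrix.of fun i j => ∑ a : Fin 3, M (i, a) (j, a)

/-- A 9×9 matrix is a dd-matrix if all three diagonal 3×3 blocks are diagonal. -/
def IsDD (M : Matrix (Fin 3 × Fin 3) (Fin 3 × Fin 3) ℂ) : Prop :=
  ∀ i a b : Fin 3, a ≠ b → M (i, a) (i, b) = 0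

/-- A matrix is monomial if each row and each column has exactly one nonzero
entry and all nonzero entries have modulus 1. -/
def IsMonomial (γ : Matrix (Fin 3) (Fin 3) ℂ) : Prop :=
  (∀ i, ∃! j, γ i j ≠ 0) ∧ (∀ j, ∃! i, γ i j ≠ 0) ∧
  ∀ i j, γ i j ≠ 0 → ‖γ i j‖ = 1

/-- The group `MSU(3)` of monomial matrices in `SU(3)`, as a set. -/
def MSU3 : Set (Matrix (Fin 3) (Fin 3) ℂ) :=
  {γ | γ ∈ Matrix.specialUnitaryGroup (Fin 3) ℂ ∧ IsMonomial γ}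

lemma entryB (γ₁ γ₂ : Matrix (Fin 3) (Fin 3) ℂ) (M : Matrix (Fin 3 × Fin 3) (Fin 3 × Fin 3) ℂ)
    (i a j b : Fin 3) :
    ((γ₁ ⊗ₖ γ₂) * M * (γ₁ ⊗ₖ γ₂)ᴴ) (i,a) (j,b)
    = ∑ k, ∑ m, (γ₁ i k * star (γ₁ j m)) *
        (∑ l, ∑ n, γ₂ a l * M (k,l) (m,n) * star (γ₂ b n)) := by
  simp only [mul_apply, conjTranspose_apply, kroneckerMap_apply, Fintype.sum_prod_type,
    star_mul', Fin.sum_univ_three]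
  ring

lemma entryA (γ₁ γ₂ : Matrix (Fin 3) (Fin 3) ℂ) (M : Matrix (Fin 3 × Fin 3) (Fin 3 × Fin 3) ℂ)
    (i a j b : Fin 3) :
    ((γ₁ ⊗ₖ γ₂) * M * (γ₁ ⊗ₖ γ₂)ᴴ) (i,a) (j,b)
    = ∑ l, ∑ n, (γ₂ a l * star (γ₂ b n)) *
        (∑ k, ∑ m, γ₁ i k * M (k,l) (m,n) * star (γ₁ j m)) := by
  simp only [mul_apply, conjTranspose_apply, kroneckerMap_apply, Fintype.sum_prod_type,
    star_mul', Fin.sum_univ_three]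
  ring

lemma blockB_zero (γ₁ γ₂ : Matrix (Fin 3) (Fin 3) ℂ) (hu : γ₁ᴴ * γ₁ = 1)
    (M : Matrix (Fin 3 × Fin 3) (Fin 3 × Fin 3) ℂ) (hB : blockB M = 0) :
    blockB ((γ₁ ⊗ₖ γ₂) * M * (γ₁ ⊗ₖ γ₂)ᴴ) = 0 := by
  have h1 : ∀ m k : Fin 3, ∑ i, γ₁ i k * star (γ₁ i m) = if m = k then 1 else 0 := by
    intro m k
    have := congrFun (congrFun hu m) k
    simpa [mul_apply, conjTranspose_apply, one_apply, mul_comm] using this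
  have hB' : ∀ l n : Fin 3, ∑ k, M (k,l) (k,n) = 0 := by
    intro l n
    have := congrFun (congrFun hB l) n
    simpa [blockB] using this
  ext a b
  show (∑ i, ((γ₁ ⊗ₖ γ₂) * M * (γ₁ ⊗ₖ γ₂)ᴴ) (i, a) (i, b)) = 0
  calc (∑ i, ((γ₁ ⊗ₖ γ₂) * M * (γ₁ ⊗ₖ γ₂)ᴴ) (i, a) (i, b))
      = ∑ k, ∑ m, (∑ i, γ₁ i k * star (γ₁ i m)) *
          (∑ l, ∑ n, γ₂ a l * M (k,l) (m,n) * star (γ₂ b n)) := by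
        simp only [entryB, Fin.sum_univ_three]; ring
    _ = ∑ k, ∑ l, ∑ n, γ₂ a l * M (k,l) (k,n) * star (γ₂ b n) := by
        simp only [h1]
        norm_num [Fin.sum_univ_three]
    _ = ∑ l, ∑ n, γ₂ a l * (∑ k, M (k,l) (k,n)) * star (γ₂ b n) := by
        simp only [Fin.sum_univ_three]; ring
    _ = 0 := by simp [hB']

lemma blockA_zero (γ₁ γ₂ : Matrix (Fin 3) (Fin 3) ℂ) (hu : γ₂ᴴ * γ₂ = 1)
    (M : Matrix (Fin 3 × Fin 3) (Fin 3 × Fin 3) ℂ) (hA : blockA M = 0) :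
    blockA ((γ₁ ⊗ₖ γ₂) * M * (γ₁ ⊗ₖ γ₂)ᴴ) = 0 := by
  have h1 : ∀ n l : Fin 3, ∑ a, γ₂ a l * star (γ₂ a n) = if n = l then 1 else 0 := by
    intro n l
    have := congrFun (congrFun hu n) l
    simpa [mul_apply, conjTranspose_apply, one_apply, mul_comm] using this
  have hA' : ∀ k m : Fin 3, ∑ l, M (k,l) (m,l) = 0 := by
    intro k m
    have := congrFun (congrFun hA k) m
    simpa [blockA] using this
  ext i j
  show (∑ a, ((γ₁ ⊗ₖ γ₂) * M * (γ₁ ⊗ₖ γ₂)ᴴ) (i, a) (j, a)) = 0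
  calc (∑ a, ((γ₁ ⊗ₖ γ₂) * M * (γ₁ ⊗ₖ γ₂)ᴴ) (i, a) (j, a))
      = ∑ l, ∑ n, (∑ a, γ₂ a l * star (γ₂ a n)) *
          (∑ k, ∑ m, γ₁ i k * M (k,l) (m,n) * star (γ₁ j m)) := by
        simp only [entryA, Fin.sum_univ_three]; ring
    _ = ∑ l, ∑ k, ∑ m, γ₁ i k * M (k,l) (m,l) * star (γ₁ j m) := by
        simp only [h1]
        norm_num [Fin.sum_univ_three]
    _ = ∑ k, ∑ m, γ₁ i k * (∑ l, M (k,l) (m,l)) * star (γ₁ j m) := by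
        simp only [Fin.sum_univ_three]; ring
    _ = 0 := by simp [hA']

theorem stmt4 (M : Matrix (Fin 3 × Fin 3) (Fin 3 × Fin 3) ℂ)
    (hM : M.IsHermitian) (hB : blockB M = 0) (hA : blockA M = 0) (hdd : IsDD M)
    (γ₁ γ₂ : Matrix (Fin 3) (Fin 3) ℂ) (h₁ : γ₁ ∈ MSU3) (h₂ : γ₂ ∈ MSU3) :
    ((γ₁ ⊗ₖ γ₂) * M * (γ₁ ⊗ₖ γ₂)ᴴ).IsHermitian ∧
    blockB ((γ₁ ⊗ₖ γ₂) * M * (γ₁ ⊗ₖ γ₂)ᴴ) = 0 ∧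
    blockA ((γ₁ ⊗ₖ γ₂) * M * (γ₁ ⊗ₖ γ₂)ᴴ) = 0 ∧
    IsDD ((γ₁ ⊗ₖ γ₂) * M * (γ₁ ⊗ₖ γ₂)ᴴ) := by
  have hu₁ : γ₁ᴴ * γ₁ = 1 := by
    have := (Matrix.mem_specialUnitaryGroup_iff.mp h₁.1).1
    rw [Matrix.mem_unitaryGroup_iff'] at this
    simpa [Matrix.star_eq_conjTranspose] using this
  have hu₂ : γ₂ᴴ * γ₂ = 1 := by
    have := (Matrix.mem_specialUnitaryGroup_iff.mp h₂.1).1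
    rw [Matrix.mem_unitaryGroup_iff'] at this
    simpa [Matrix.star_eq_conjTranspose] using this
  refine ⟨Matrix.isHermitian_mul_mul_conjTranspose _ hM, blockB_zero γ₁ γ₂ hu₁ M hB,
    blockA_zero γ₁ γ₂ hu₂ M hA, ?_⟩
  intro i a b hab
  rw [entryB]
  apply Finset.sum_eq_zero; intro k _
  apply Finset.sum_eq_zero; intro m _
  by_cases hkm : k = m
  · subst hkm
    have hinner : (∑ l, ∑ n, γ₂ a l * M (k,l) (k,n) * star (γ₂ b n)) = 0 := by
      apply Finset.sum_eq_zero; intro l _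
      apply Finset.sum_eq_zero; intro n _
      by_cases hln : l = n
      · subst hln
        rcases h₂.2.2.1 l with ⟨c, hc, huniq⟩
        by_cases hga : γ₂ a l = 0
        · simp [hga]
        · by_cases hgb : γ₂ b l = 0
          · simp [hgb]
          · exact absurd ((huniq a hga).trans (huniq b hgb).symm) hab
      · simp [hdd k l n hln]
    rw [hinner, mul_zero]
  · rcases h₁.2.1 i with ⟨c, hc, huniq⟩
    by_cases hgk : γ₁ i k = 0
    · simp [hgk]
    · have hgm : γ₁ i m = 0 := by
        by_contra hgm
        exact hkm ((huniq k hgk).trans (huniq m hgm).symm)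
      simp [hgm]
end
end

section
/- Each of the three diagonal 3×3 blocks of the matrix (U₀⊗I₃)H₀(U₀⊗I₃)†, where U₀ = (1/8)[[6,4,2√3],[-1,6,-3√3],[-3√3,2√3,5]] and H₀ is as in equation (9), has three distinct eigenvalues. -/
noncomputable section

open Matrix Kronecker

/-- The matrix `H₀` of equation (9), as a 9×9 matrix. -/
def H9 : Matrix (Fin 9) (Fin 9) ℂ :=
  !![1, 0,  0, 0,  0,           0,           0, 0, 0;
     0, 0,  0, 0,  0, Complex.I,              2, 0, 0;
     0, 0, -1, 0,  0,           0,           0, 0, 0;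
     0, 0,  0, 0,  0,           0,           0, 0, 0;
     0, 0,  0, 0, -1,           0,           0, 0, 0;
     0, -Complex.I, 0, 0, 0,    1,           1, 0, 0;
     0, 2,  0, 0,  0,           1,          -1, 0, 0;
     0, 0,  0, 0,  0,           0,           0, 1, 0;
     0, 0,  0, 0,  0,           0,           0, 0, 0]

/-- `H₀` viewed as a bipartite (3×3-block) matrix, index `(i, a)` corresponding
to row `3i + a`. -/
def H₀ : Matrix (Fin 3 × Fin 3) (Fin 3 × Fin 3) ℂ :=
  Matrix.of fun p q => H9 (finProdFinEquiv p) (finProdFinEquiv q)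

/-- The matrix `U₀` from equation (9). -/
def U₀ : Matrix (Fin 3) (Fin 3) ℂ :=
  (8 : ℂ)⁻¹ • !![6, 4, 2 * (Real.sqrt 3 : ℂ);
                 -1, 6, -3 * (Real.sqrt 3 : ℂ);
                 -3 * (Real.sqrt 3 : ℂ), 2 * (Real.sqrt 3 : ℂ), 5]

/-- The `i`-th diagonal 3×3 block of a 9×9 matrix. -/
def diagBlock (M : Matrix (Fin 3 × Fin 3) (Fin 3 × Fin 3) ℂ) (i : Fin 3) :
    Matrix (Fin 3) (Fin 3) ℂ :=
  Matrix.of fun a b => M (i, a) (i, b)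

/-! ### Auxiliary lemmas -/

section Aux

variable {α : Type*} {m : ℕ}

lemma cons_val_five' (x : α) (u : Fin (m + 5) → α) :
    vecCons x u 5 = vecHead (vecTail (vecTail (vecTail (vecTail u)))) := rfl
lemma cons_val_six' (x : α) (u : Fin (m + 6) → α) :
    vecCons x u 6 = vecHead (vecTail (vecTail (vecTail (vecTail (vecTail u))))) := rfl
lemma cons_val_seven' (x : α) (u : Fin (m + 7) → α) :
    vecCons x u 7 = vecHead (vecTail (vecTail (vecTail (vecTail (vecTail (vecTail u)))))) := rfl
lemma cons_val_eight' (x : α) (u : Fin (m + 8) → α) :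
    vecCons x u 8 =
      vecHead (vecTail (vecTail (vecTail (vecTail (vecTail (vecTail (vecTail u))))))) := rfl
lemma vecHead_const' (a : α) : vecHead (fun _ : Fin (m+1) => a) = a := rfl
lemma vecTail_const' (a : α) : vecTail (fun _ : Fin (m+1) => a) = fun _ : Fin m => a := rfl

end Aux

lemma sq3 : ((Real.sqrt 3 : ℝ) : ℂ)^2 = 3 := by
  rw [← Complex.ofReal_pow, Real.sq_sqrt] <;> norm_num

open Polynomial in
/-- A 3×3 complex matrix whose characteristic polynomial is a depressed cubic with
nonvanishing discriminant has three distinct eigenvalues. -/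
lemma spec_cubic (M : Matrix (Fin 3) (Fin 3) ℂ) (β γ : ℂ)
    (hdet : ∀ z : ℂ, (z • (1 : Matrix (Fin 3) (Fin 3) ℂ) - M).det = z^3 + β*z + γ)
    (hdisc : 4*β^3 + 27*γ^2 ≠ 0) :
    ∃ a b c : ℂ, a ≠ b ∧ a ≠ c ∧ b ≠ c ∧ spectrum ℂ M = {a, b, c} := by
  have ha : (⟨1,0,β,γ⟩ : Cubic ℂ).a ≠ 0 := one_ne_zero
  obtain ⟨x, y, z, h3⟩ := (Cubic.splits_iff_roots_eq_three (φ := RingHom.id ℂ) ha).mp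
    (IsAlgClosed.splits _)
  have hd : (⟨1,0,β,γ⟩ : Cubic ℂ).discr ≠ 0 := by
    show (0:ℂ)^2*β^2 - 4*1*β^3 - 4*0^3*γ - 27*1^2*γ^2 + 18*1*0*β*γ ≠ 0
    intro h; exact hdisc (by linear_combination -h)
  obtain ⟨hxy, hxz, hyz⟩ := (Cubic.discr_ne_zero_iff_roots_ne ha h3).mp hd
  have hprod : (⟨1,0,β,γ⟩ : Cubic ℂ).toPoly
      = C (1:ℂ) * (X - C x) * (X - C y) * (X - C z) := by
    have h := Cubic.eq_prod_three_roots ha h3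
    rwa [Cubic.map_toPoly, Polynomial.map_id] at h
  have hfac : ∀ w : ℂ, w^3 + β*w + γ = (w - x) * ((w - y) * (w - z)) := by
    intro w
    have h := congrArg (Polynomial.eval w) hprod
    simp [Cubic.toPoly] at h
    linear_combination h
  refine ⟨x, y, z, hxy, hxz, hyz, ?_⟩
  ext w
  simp only [spectrum.mem_iff, Algebra.algebraMap_eq_smul_one,
    Matrix.isUnit_iff_isUnit_det, isUnit_iff_ne_zero, not_not, hdet w, hfac w,
    Set.mem_insert_iff, Set.mem_singleton_iff, mul_eq_zero, sub_eq_zero]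

set_option maxHeartbeats 2000000 in
lemma blk0 : diagBlock ((U₀ ⊗ₖ (1 : Matrix (Fin 3) (Fin 3) ℂ)) * H₀ *
      (U₀ ⊗ₖ (1 : Matrix (Fin 3) (Fin 3) ℂ))ᴴ) 0 =
    !![3/8, 3*(Real.sqrt 3:ℂ)/8, (Real.sqrt 3:ℂ)/8;
       3*(Real.sqrt 3:ℂ)/8, -1/16, 3*Complex.I/8;
       (Real.sqrt 3:ℂ)/8, -3*Complex.I/8, -5/16] := by
  ext a b
  fin_cases a <;> fin_cases b <;>
  · simp [diagBlock, Matrix.mul_apply, Fintype.sum_prod_type, Matrix.kroneckerMap_apply,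
      Matrix.one_apply, Matrix.conjTranspose_apply, H₀, H9, U₀, Fin.sum_univ_three,
      finProdFinEquiv, Matrix.smul_apply, map_ofNat, Complex.conj_ofReal, Matrix.of_apply,
      cons_val_five', cons_val_six', cons_val_seven', cons_val_eight',
      vecHead_const', vecTail_const']
    ring_nf
    try simp [sq3]
    try ring_nf
    try norm_num

set_option maxHeartbeats 2000000 in
lemma blk1 : diagBlock ((U₀ ⊗ₖ (1 : Matrix (Fin 3) (Fin 3) ℂ)) * H₀ *
      (U₀ ⊗ₖ (1 : Matrix (Fin 3) (Fin 3) ℂ))ᴴ) 1 =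
    !![-13/32, 3*(Real.sqrt 3:ℂ)/32, -9*(Real.sqrt 3:ℂ)/32;
       3*(Real.sqrt 3:ℂ)/32, -9/64, -3*Complex.I/32;
       -9*(Real.sqrt 3:ℂ)/32, 3*Complex.I/32, 35/64] := by
  ext a b
  fin_cases a <;> fin_cases b <;>
  · simp [diagBlock, Matrix.mul_apply, Fintype.sum_prod_type, Matrix.kroneckerMap_apply,
      Matrix.one_apply, Matrix.conjTranspose_apply, H₀, H9, U₀, Fin.sum_univ_three,
      finProdFinEquiv, Matrix.smul_apply, map_ofNat, Complex.conj_ofReal, Matrix.of_apply,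
      cons_val_five', cons_val_six', cons_val_seven', cons_val_eight',
      vecHead_const', vecTail_const']
    ring_nf
    try simp [sq3]
    try ring_nf
    try norm_num

set_option maxHeartbeats 2000000 in
lemma blk2 : diagBlock ((U₀ ⊗ₖ (1 : Matrix (Fin 3) (Fin 3) ℂ)) * H₀ *
      (U₀ ⊗ₖ (1 : Matrix (Fin 3) (Fin 3) ℂ))ᴴ) 2 =
    !![1/32, -15*(Real.sqrt 3:ℂ)/32, 5*(Real.sqrt 3:ℂ)/32;
       -15*(Real.sqrt 3:ℂ)/32, 13/64, -9*Complex.I/32;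
       5*(Real.sqrt 3:ℂ)/32, 9*Complex.I/32, -15/64] := by
  ext a b
  fin_cases a <;> fin_cases b <;>
  · simp [diagBlock, Matrix.mul_apply, Fintype.sum_prod_type, Matrix.kroneckerMap_apply,
      Matrix.one_apply, Matrix.conjTranspose_apply, H₀, H9, U₀, Fin.sum_univ_three,
      finProdFinEquiv, Matrix.smul_apply, map_ofNat, Complex.conj_ofReal, Matrix.of_apply,
      cons_val_five', cons_val_six', cons_val_seven', cons_val_eight',
      vecHead_const', vecTail_const']
    ring_nf
    try simp [sq3]
    try ring_nf
    try norm_num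

theorem stmt7 (i : Fin 3) :
    ∃ a b c : ℂ, a ≠ b ∧ a ≠ c ∧ b ≠ c ∧
      spectrum ℂ (diagBlock ((U₀ ⊗ₖ (1 : Matrix (Fin 3) (Fin 3) ℂ)) * H₀ *
        (U₀ ⊗ₖ (1 : Matrix (Fin 3) (Fin 3) ℂ))ᴴ) i) = {a, b, c} := by
  fin_cases i <;> simp only [Fin.zero_eta, Fin.mk_one, show (⟨2, by omega⟩ : Fin 3) = 2 from rfl]
  · rw [blk0]
    refine spec_cubic _ (-187/256) (-183/2048) ?_ (by norm_num)
    intro z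
    simp [Matrix.det_fin_three, Matrix.smul_apply, Matrix.sub_apply, Matrix.one_apply]
    ring_nf
    simp [sq3, Complex.I_sq]
    ring_nf
  · rw [blk1]
    refine spec_cubic _ (-2107/4096) (-7047/131072) ?_ (by norm_num)
    intro z
    simp [Matrix.det_fin_three, Matrix.smul_apply, Matrix.sub_apply, Matrix.one_apply]
    ring_nf
    simp [sq3, Complex.I_sq]
    ring_nf
  · rw [blk2]
    refine spec_cubic _ (-3523/4096) (-17781/131072) ?_ (by norm_num)
    intro z
    simp [Matrix.det_fin_three, Matrix.smul_apply, Matrix.sub_apply, Matrix.one_apply]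
    ring_nf
    simp [sq3, Complex.I_sq]
    ring_nf
end
end

section
/- Suppose cos β ≠ 0 and the 3×2 real matrix with rows (cosβ cosγ (3−2cos²γ), sinγ(2cos²β cos²γ − 5cos²β + 2cos²γ + 1)), (cos2β sin2γ, cosβ(6cos²β cos²γ − 5cos²β − 2cos²γ + 3)), (cosβ sinγ(1+cos²γ), cosγ(cos²β cos²γ + 3cos²β + cos²γ − 2)) has rank at most 1. If additionally sinγ ≠ 0, then cos²β = (1 + 2sin²2γ)/(4 + sin²γ + 2sin²2γ). -/
noncomputable section

open Real Matrix

/-- If a 3×2 real matrix has rank ≤ 1, the 2×2 minor on rows 0 and 2 vanishes. -/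
lemma minor02_eq_zero (M : Matrix (Fin 3) (Fin 2) ℝ) (h : M.rank ≤ 1) :
    M 0 0 * M 2 1 - M 0 1 * M 2 0 = 0 := by
  by_contra hd
  set N : Matrix (Fin 2) (Fin 2) ℝ := !![M 0 0, M 0 1; M 2 0, M 2 1] with hN
  have hdet : N.det ≠ 0 := by
    simpa [hN, Matrix.det_fin_two] using hd
  have hNP : N = (!![1, 0, 0; 0, 0, 1] : Matrix (Fin 2) (Fin 3) ℝ) * M := by
    ext i j
    fin_cases i <;> fin_cases j <;>
      simp [hN, Matrix.mul_apply, Fin.sum_univ_succ]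
  have h2 : N.rank ≤ 1 := by
    rw [hNP]
    exact le_trans (Matrix.rank_mul_le_right _ _) h
  have h3 : N.rank = 2 := by
    have := Matrix.rank_of_isUnit N (Matrix.isUnit_iff_isUnit_det N |>.mpr
      (isUnit_iff_ne_zero.mpr hdet))
    simpa using this
  omega

theorem stmt14 (β γ : ℝ) (hβ : cos β ≠ 0) (hγ : sin γ ≠ 0)
    (hrank : (!![cos β * cos γ * (3 - 2 * cos γ ^ 2),
                 sin γ * (2 * cos β ^ 2 * cos γ ^ 2 - 5 * cos β ^ 2 + 2 * cos γ ^ 2 + 1);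
                 cos (2 * β) * sin (2 * γ),
                 cos β * (6 * cos β ^ 2 * cos γ ^ 2 - 5 * cos β ^ 2 - 2 * cos γ ^ 2 + 3);
                 cos β * sin γ * (1 + cos γ ^ 2),
                 cos γ * (cos β ^ 2 * cos γ ^ 2 + 3 * cos β ^ 2 + cos γ ^ 2 - 2)] :
        Matrix (Fin 3) (Fin 2) ℝ).rank ≤ 1) :
    cos β ^ 2 = (1 + 2 * sin (2 * γ) ^ 2) / (4 + sin γ ^ 2 + 2 * sin (2 * γ) ^ 2) := by
  have hmin := minor02_eq_zero _ hrank
  norm_num [Matrix.cons_val_zero, Matrix.cons_val_one, Matrix.head_cons,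
    Matrix.cons_val_two, Matrix.tail_cons] at hmin
  -- cancel the factor cos β
  have hE : cos γ ^ 2 * (3 - 2 * cos γ ^ 2) *
        (cos β ^ 2 * cos γ ^ 2 + 3 * cos β ^ 2 + cos γ ^ 2 - 2) -
      sin γ ^ 2 * (2 * cos β ^ 2 * cos γ ^ 2 - 5 * cos β ^ 2 + 2 * cos γ ^ 2 + 1) *
        (1 + cos γ ^ 2) = 0 := by
    apply mul_left_cancel₀ hβ
    rw [mul_zero]
    linear_combination hmin
  have hsc : sin γ ^ 2 + cos γ ^ 2 - 1 = 0 := by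
    linear_combination sin_sq_add_cos_sq γ
  have hden : (4 : ℝ) + sin γ ^ 2 + 2 * sin (2 * γ) ^ 2 ≠ 0 := by positivity
  rw [eq_div_iff hden, Real.sin_two_mul]
  linear_combination hE +
    (2 * cos β ^ 2 * cos γ ^ 4 + 5 * cos β ^ 2 * cos γ ^ 2 - 4 * cos β ^ 2 +
      2 * cos γ ^ 4 - 5 * cos γ ^ 2 + 1) * hsc
end
end
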